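/- Let A be a real m×n matrix of rank ρ with SVD A = S_A Σ_A T_Aᵀ, let H be a real n×r matrix with r ≤ ρ, and set Ĥ = T_Aᵀ H. Then (i) σ_r(AH) ≥ σ_ρ(A)·σ_r(Ĥ_{ρ,r}) = σ_r(Ĥ_{ρ,r})/‖A⁺‖, and (ii) if rank(AH) = rank(Ĥ_{ρ,r}) = r, then ‖(AH)⁺‖ ≤ ‖A⁺‖·‖Ĥ_{ρ,r}⁺‖. -/

import Mathlib

open Matrix MeasureTheory ProbabilityTheory

/-- The `j`-th largest singular value (1-indexed; `0` for `j` out of range). -/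
noncomputable def sval {m n : ℕ} (A : Matrix (Fin m) (Fin n) ℝ) (j : ℕ) : ℝ :=
  if h : 1 ≤ j ∧ j ≤ n then
    Real.sqrt ((show (Aᵀ * A).IsHermitian by
        simpa using Matrix.isHermitian_conjTranspose_mul_self A).eigenvalues
      (Tuple.sort (show (Aᵀ * A).IsHermitian by
        simpa using Matrix.isHermitian_conjTranspose_mul_self A).eigenvalues ⟨n - j, by omega⟩))
  else 0

/-- The spectral norm of a real matrix. -/
noncomputable def spec {m n : ℕ} (A : Matrix (Fin m) (Fin n) ℝ) : ℝ :=
  ‖LinearMap.toContinuousLinearMap (Matrix.toEuclideanLin A)‖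

open Classical in
/-- The Moore–Penrose pseudo-inverse. -/
noncomputable def pinv {m n : ℕ} (M : Matrix (Fin m) (Fin n) ℝ) : Matrix (Fin n) (Fin m) ℝ :=
  if h : ∃ X : Matrix (Fin n) (Fin m) ℝ,
      M * X * M = M ∧ X * M * X = X ∧ (M * X)ᵀ = M * X ∧ (X * M)ᵀ = X * M
  then h.choose else 0

/-- Leading (northwestern) `k × l` submatrix. -/
def lead {m n : ℕ} (A : Matrix (Fin m) (Fin n) ℝ) (k l : ℕ) (hk : k ≤ m) (hl : l ≤ n) :
    Matrix (Fin k) (Fin l) ℝ :=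
  A.submatrix (Fin.castLE hk) (Fin.castLE hl)

/-- Schur complement of the leading `h × h` block in `A`. -/
noncomputable def schur {n : ℕ} (A : Matrix (Fin n) (Fin n) ℝ) (h : ℕ) (hh : h ≤ n) :
    Matrix (Fin (n - h)) (Fin (n - h)) ℝ :=
  A.submatrix (fun i => (⟨h + i.1, by have := i.isLt; omega⟩ : Fin n))
      (fun j => (⟨h + j.1, by have := j.isLt; omega⟩ : Fin n))
    - A.submatrix (fun i => (⟨h + i.1, by have := i.isLt; omega⟩ : Fin n)) (Fin.castLE hh)
      * (A.submatrix (Fin.castLE hh) (Fin.castLE hh))⁻¹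
      * A.submatrix (Fin.castLE hh) (fun j => (⟨h + j.1, by have := j.isLt; omega⟩ : Fin n))

/-- The distribution of a standard Gaussian random `m × n` matrix (as entrywise functions). -/
noncomputable def stdGaussianM (m n : ℕ) : Measure (Fin m → Fin n → ℝ) :=
  Measure.pi fun _ => Measure.pi fun _ => gaussianReal 0 1

/-- The `m × n` "diagonal" matrix of singular values of `A` in nonincreasing order. -/
noncomputable def svdSigma {m n : ℕ} (A : Matrix (Fin m) (Fin n) ℝ) : Matrix (Fin m) (Fin n) ℝ :=
  Matrix.of fun i j => if (i : ℕ) = (j : ℕ) then sval A ((i : ℕ) + 1) else 0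

/-!
Singular values are square roots of the sorted eigenvalues of `Mᵀ M`, so a matrix `M` with
`q` columns satisfies `σ_q(M) ‖x‖ ≤ ‖M x‖`, with equality at an eigenvector of the smallest
eigenvalue. As `S` is orthogonal,
`‖A H x‖ = ‖Σ_A Ĥ x‖ ≥ σ_ρ(A) ‖Ĥ_{ρ,r} x‖ ≥ σ_ρ(A) σ_r(Ĥ_{ρ,r}) ‖x‖`, which is (i).
The pseudo-inverse of `A` is `T Σ_A⁺ Sᵀ`, where `Σ_A⁺` inverts the nonzero singular values,
so `‖A⁺‖ = 1 / σ_ρ(A)`; and a matrix `M` of full column rank `q` has `M⁺ = (Mᵀ M)⁻¹ Mᵀ` with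
`‖M⁺‖ = 1 / σ_q(M)`, so (ii) is (i) inverted.
-/

open Finset

section DotProduct

variable {ι κ : Type*} [Fintype ι] [Fintype κ]

lemma dotProduct_self_nonneg (v : ι → ℝ) : 0 ≤ v ⬝ᵥ v :=
  Finset.sum_nonneg fun _ _ => mul_self_nonneg _

lemma mulVec_dotProduct_mulVec_self (M : Matrix κ ι ℝ) (x : ι → ℝ) :
    (M *ᵥ x) ⬝ᵥ (M *ᵥ x) = x ⬝ᵥ ((Mᵀ * M) *ᵥ x) := by
  rw [← mulVec_mulVec, dotProduct_mulVec x, vecMul_transpose]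

lemma mulVec_dotProduct_self_of_transpose_mul_self [DecidableEq ι] {U : Matrix κ ι ℝ}
    (hU : Uᵀ * U = 1) (v : ι → ℝ) : (U *ᵥ v) ⬝ᵥ (U *ᵥ v) = v ⬝ᵥ v := by
  rw [mulVec_dotProduct_mulVec_self, hU, one_mulVec]

end DotProduct

section SingularValues

variable {p q : ℕ}

noncomputable def sortedGramEigenvalues (M : Matrix (Fin p) (Fin q) ℝ) (i : Fin q) : ℝ :=
  (isHermitian_conjTranspose_mul_self M).eigenvalues
    (Tuple.sort (isHermitian_conjTranspose_mul_self M).eigenvalues i)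

lemma sortedGramEigenvalues_nonneg (M : Matrix (Fin p) (Fin q) ℝ) (i : Fin q) :
    0 ≤ sortedGramEigenvalues M i :=
  eigenvalues_conjTranspose_mul_self_nonneg M _

lemma sortedGramEigenvalues_monotone (M : Matrix (Fin p) (Fin q) ℝ) :
    Monotone (sortedGramEigenvalues M) :=
  Tuple.monotone_sort _

lemma sortedGramEigenvalues_le_eigenvalues (M : Matrix (Fin p) (Fin q) ℝ) (i : Fin q) :
    sortedGramEigenvalues M ⟨0, i.pos⟩ ≤
      (isHermitian_conjTranspose_mul_self M).eigenvalues i := by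
  have h : (isHermitian_conjTranspose_mul_self M).eigenvalues i = sortedGramEigenvalues M
      ((Tuple.sort (isHermitian_conjTranspose_mul_self M).eigenvalues).symm i) := by
    rw [sortedGramEigenvalues, Equiv.apply_symm_apply]
  exact h ▸ sortedGramEigenvalues_monotone M (by simp [Fin.le_def])

lemma card_sortedGramEigenvalues_ne_zero (M : Matrix (Fin p) (Fin q) ℝ) :
    #{i | sortedGramEigenvalues M i ≠ 0} = M.rank := by
  rw [← rank_transpose_mul_self, ← conjTranspose_eq_transpose_of_trivial,
    (isHermitian_conjTranspose_mul_self M).rank_eq_card_non_zero_eigs, ← Fintype.card_subtype]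
  exact Fintype.card_congr ((Tuple.sort _).subtypeEquiv fun _ => Iff.rfl)

/-- Since the sorted eigenvalues are nonnegative and ascending, the nonzero ones are exactly the
last `rank M`. -/
lemma sortedGramEigenvalues_pos_iff (M : Matrix (Fin p) (Fin q) ℝ) (i : Fin q) :
    0 < sortedGramEigenvalues M i ↔ q - M.rank ≤ i := by
  set e := sortedGramEigenvalues M
  have hcard := card_sortedGramEigenvalues_ne_zero M
  have hrank : M.rank ≤ q := M.rank_le_width
  have hpos : ∀ j, 0 < e j ↔ e j ≠ 0 := fun j =>
    (sortedGramEigenvalues_nonneg M j).lt_iff_ne'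
  constructor
  · intro hi
    have hsub : Finset.Ici i ⊆ ({j | e j ≠ 0} : Finset (Fin q)) := fun j hj => by
      simp only [Finset.mem_filter, Finset.mem_univ, true_and, ← hpos]
      exact hi.trans_le (sortedGramEigenvalues_monotone M (Finset.mem_Ici.mp hj))
    have := Finset.card_le_card hsub
    rw [Fin.card_Ici, hcard] at this
    omega
  · intro hi
    by_contra hz
    have hsub : ({j | e j ≠ 0} : Finset (Fin q)) ⊆ Finset.Ioi i := fun j hj => by
      simp only [Finset.mem_filter, Finset.mem_univ, true_and, ← hpos] at hj
      by_contra hji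
      exact hz (hj.trans_le (sortedGramEigenvalues_monotone M (not_lt.mp (by simpa using hji))))
    have := Finset.card_le_card hsub
    rw [Fin.card_Ioi, hcard] at this
    omega

lemma sval_eq_sqrt (M : Matrix (Fin p) (Fin q) ℝ) {j : ℕ} (h1 : 1 ≤ j) (h2 : j ≤ q) :
    sval M j = √(sortedGramEigenvalues M ⟨q - j, by omega⟩) := by
  rw [sval, dif_pos ⟨h1, h2⟩]; rfl

@[simp]
lemma sval_zero (M : Matrix (Fin p) (Fin q) ℝ) : sval M 0 = 0 := by
  simp [sval]

lemma sval_nonneg (M : Matrix (Fin p) (Fin q) ℝ) (j : ℕ) : 0 ≤ sval M j := by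
  rw [sval]; split
  · exact Real.sqrt_nonneg _
  · exact le_rfl

lemma sval_sq (M : Matrix (Fin p) (Fin q) ℝ) {j : ℕ} (h1 : 1 ≤ j) (h2 : j ≤ q) :
    sval M j ^ 2 = sortedGramEigenvalues M ⟨q - j, by omega⟩ := by
  rw [sval_eq_sqrt M h1 h2, Real.sq_sqrt (sortedGramEigenvalues_nonneg M _)]

lemma sval_antitone (M : Matrix (Fin p) (Fin q) ℝ) {j j' : ℕ} (h1 : 1 ≤ j) (h2 : j ≤ j')
    (h3 : j' ≤ q) : sval M j' ≤ sval M j := by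
  rw [sval_eq_sqrt M (h1.trans h2) h3, sval_eq_sqrt M h1 (h2.trans h3)]
  exact Real.sqrt_le_sqrt (sortedGramEigenvalues_monotone M (by simp only [Fin.mk_le_mk]; omega))

lemma sval_pos_iff (M : Matrix (Fin p) (Fin q) ℝ) {j : ℕ} (h1 : 1 ≤ j) (h2 : j ≤ q) :
    0 < sval M j ↔ j ≤ M.rank := by
  rw [sval_eq_sqrt M h1 h2, Real.sqrt_pos, sortedGramEigenvalues_pos_iff]
  simp only
  omega

lemma sval_pos (M : Matrix (Fin p) (Fin q) ℝ) {j : ℕ} (h1 : 1 ≤ j) (h2 : j ≤ M.rank) :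
    0 < sval M j :=
  (sval_pos_iff M h1 (h2.trans M.rank_le_width)).mpr h2

lemma sval_eq_zero_of_rank_lt (M : Matrix (Fin p) (Fin q) ℝ) {j : ℕ} (h : M.rank < j) :
    sval M j = 0 := by
  by_cases hj : j ≤ q
  · have := mt (sval_pos_iff M (by omega) hj).mp (not_le.mpr h)
    exact le_antisymm (not_lt.mp this) (sval_nonneg M j)
  · rw [sval, dif_neg (by omega)]

end SingularValues

section Variational

variable {p q : ℕ}

lemma dotProduct_mulVec_eq_sum_eigenvalues {N : Matrix (Fin q) (Fin q) ℝ} (hN : N.IsHermitian)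
    (x : Fin q → ℝ) : ∃ y : Fin q → ℝ,
      y ⬝ᵥ y = x ⬝ᵥ x ∧ x ⬝ᵥ (N *ᵥ x) = ∑ i, hN.eigenvalues i * y i ^ 2 := by
  set U : Matrix (Fin q) (Fin q) ℝ := ↑hN.eigenvectorUnitary
  have hsU : star U = Uᵀ := by rw [star_eq_conjTranspose, conjTranspose_eq_transpose_of_trivial]
  have hUU : Uᵀᵀ * Uᵀ = 1 := by
    rw [transpose_transpose, ← hsU]; exact Unitary.coe_mul_star_self _
  refine ⟨Uᵀ *ᵥ x, mulVec_dotProduct_self_of_transpose_mul_self hUU x, ?_⟩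
  conv_lhs => rw [hN.spectral_theorem, Unitary.conjStarAlgAut_apply]
  rw [hsU, ← mulVec_mulVec, ← mulVec_mulVec, dotProduct_mulVec, ← mulVec_transpose]
  simp only [dotProduct, mulVec_diagonal, Function.comp_apply, RCLike.ofReal_real_eq_id, id]
  exact Finset.sum_congr rfl fun i _ => by ring

lemma sval_sq_mul_dotProduct_le (M : Matrix (Fin p) (Fin q) ℝ) (x : Fin q → ℝ) :
    sval M q ^ 2 * (x ⬝ᵥ x) ≤ (M *ᵥ x) ⬝ᵥ (M *ᵥ x) := by
  rcases Nat.eq_zero_or_pos q with rfl | hq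
  · simp
  obtain ⟨y, hyx, hxy⟩ :=
    dotProduct_mulVec_eq_sum_eigenvalues (isHermitian_conjTranspose_mul_self M) x
  have hmin : sval M q ^ 2 = sortedGramEigenvalues M ⟨0, hq⟩ := by
    rw [sval_sq M hq le_rfl]; simp
  rw [mulVec_dotProduct_mulVec_self, ← conjTranspose_eq_transpose_of_trivial, hxy, ← hyx, hmin,
    dotProduct, Finset.mul_sum]
  refine Finset.sum_le_sum fun i _ => ?_
  rw [← sq]
  exact mul_le_mul_of_nonneg_right (sortedGramEigenvalues_le_eigenvalues M i)
    (sq_nonneg _)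

lemma exists_dotProduct_self_eq_one_and_sval_sq (M : Matrix (Fin p) (Fin q) ℝ) (hq : 0 < q) :
    ∃ x : Fin q → ℝ, x ⬝ᵥ x = 1 ∧ (M *ᵥ x) ⬝ᵥ (M *ᵥ x) = sval M q ^ 2 := by
  set hN := isHermitian_conjTranspose_mul_self M
  set v : Fin q → ℝ := (hN.eigenvectorBasis (Tuple.sort hN.eigenvalues ⟨0, hq⟩)).ofLp
  have hv : v ⬝ᵥ v = 1 := by
    have h := hN.eigenvectorBasis.orthonormal.1 (Tuple.sort hN.eigenvalues ⟨0, hq⟩)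
    rw [EuclideanSpace.norm_eq, Real.sqrt_eq_one] at h
    simpa [v, dotProduct, ← sq] using h
  refine ⟨v, hv, ?_⟩
  rw [mulVec_dotProduct_mulVec_self, ← conjTranspose_eq_transpose_of_trivial,
    hN.mulVec_eigenvectorBasis, dotProduct_smul, smul_eq_mul, hv, mul_one, sval_sq M hq le_rfl]
  simp [sortedGramEigenvalues]

lemma le_sval_of_forall_sq_mul_le (M : Matrix (Fin p) (Fin q) ℝ) (hq : 0 < q) {c : ℝ}
    (h : ∀ x, c ^ 2 * (x ⬝ᵥ x) ≤ (M *ᵥ x) ⬝ᵥ (M *ᵥ x)) : c ≤ sval M q := by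
  obtain ⟨x, hx, hMx⟩ := exists_dotProduct_self_eq_one_and_sval_sq M hq
  have := h x
  rw [hx, mul_one, hMx] at this
  exact (le_abs_self c).trans (abs_le_of_sq_le_sq this (sval_nonneg M q))

end Variational

section SpectralNorm

variable {p q : ℕ}

lemma norm_toLp_eq_sqrt_dotProduct {k : ℕ} (v : Fin k → ℝ) :
    ‖WithLp.toLp 2 v‖ = √(v ⬝ᵥ v) := by
  simp [EuclideanSpace.norm_eq, dotProduct, sq]

lemma spec_nonneg (M : Matrix (Fin p) (Fin q) ℝ) : 0 ≤ spec M := norm_nonneg _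

lemma spec_le_of_forall {M : Matrix (Fin p) (Fin q) ℝ} {c : ℝ} (hc : 0 ≤ c)
    (h : ∀ x, (M *ᵥ x) ⬝ᵥ (M *ᵥ x) ≤ c ^ 2 * (x ⬝ᵥ x)) : spec M ≤ c := by
  refine ContinuousLinearMap.opNorm_le_bound _ hc fun x => ?_
  calc ‖WithLp.toLp 2 (M *ᵥ x.ofLp)‖ = √((M *ᵥ x.ofLp) ⬝ᵥ (M *ᵥ x.ofLp)) :=
        norm_toLp_eq_sqrt_dotProduct _
    _ ≤ √(c ^ 2 * (x.ofLp ⬝ᵥ x.ofLp)) := Real.sqrt_le_sqrt (h _)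
    _ = c * ‖WithLp.toLp 2 x.ofLp‖ := by
        rw [Real.sqrt_mul (sq_nonneg c), Real.sqrt_sq hc, norm_toLp_eq_sqrt_dotProduct]

lemma mulVec_dotProduct_self_le_spec_sq (M : Matrix (Fin p) (Fin q) ℝ) (x : Fin q → ℝ) :
    (M *ᵥ x) ⬝ᵥ (M *ᵥ x) ≤ spec M ^ 2 * (x ⬝ᵥ x) := by
  have h := (LinearMap.toContinuousLinearMap (toEuclideanLin M)).le_opNorm (WithLp.toLp 2 x)
  have h' : (LinearMap.toContinuousLinearMap (toEuclideanLin M)) (WithLp.toLp 2 x) =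
      WithLp.toLp 2 (M *ᵥ x) := rfl
  rw [h', norm_toLp_eq_sqrt_dotProduct, norm_toLp_eq_sqrt_dotProduct] at h
  rw [← Real.sqrt_le_sqrt_iff (mul_nonneg (sq_nonneg _) (dotProduct_self_nonneg x)),
    Real.sqrt_mul (sq_nonneg _), Real.sqrt_sq (spec_nonneg M)]
  exact h

lemma abs_apply_le_spec (M : Matrix (Fin p) (Fin q) ℝ) (i : Fin p) (j : Fin q) :
    |M i j| ≤ spec M := by
  have h := mulVec_dotProduct_self_le_spec_sq M (Pi.single j 1)
  rw [mulVec_single_one, dotProduct_single, Pi.single_eq_same, mul_one, mul_one] at h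
  refine abs_le_of_sq_le_sq ((?_ : M i j ^ 2 ≤ _).trans h) (spec_nonneg M)
  rw [dotProduct, ← Finset.add_sum_erase _ _ (Finset.mem_univ i), sq]
  exact le_add_of_nonneg_right (Finset.sum_nonneg fun _ _ => mul_self_nonneg _)

end SpectralNorm

section PenroseInverse

variable {p q p' q' : ℕ}

def IsPenroseInverse (M : Matrix (Fin p) (Fin q) ℝ) (X : Matrix (Fin q) (Fin p) ℝ) : Prop :=
  M * X * M = M ∧ X * M * X = X ∧ (M * X)ᵀ = M * X ∧ (X * M)ᵀ = X * M

namespace IsPenroseInverse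

variable {M : Matrix (Fin p) (Fin q) ℝ} {X Y : Matrix (Fin q) (Fin p) ℝ}

lemma unique (hX : IsPenroseInverse M X) (hY : IsPenroseInverse M Y) : X = Y := by
  obtain ⟨hX₁, hX₂, hX₃, hX₄⟩ := hX
  obtain ⟨hY₁, hY₂, hY₃, hY₄⟩ := hY
  have hMX : M * X = M * Y :=
    calc M * X = (M * Y)ᵀ * (M * X)ᵀ := by rw [hY₃, hX₃, ← Matrix.mul_assoc, hY₁]
      _ = (M * X * M * Y)ᵀ := by simp only [transpose_mul, Matrix.mul_assoc]
      _ = M * Y := by rw [hX₁, hY₃]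
  have hXM : X * M = Y * M :=
    calc X * M = (X * M)ᵀ * (Y * M)ᵀ := by
          rw [hX₄, hY₄, Matrix.mul_assoc, ← Matrix.mul_assoc M, hY₁]
      _ = (Y * (M * X * M))ᵀ := by simp only [transpose_mul, Matrix.mul_assoc]
      _ = Y * M := by rw [hX₁, hY₄]
  calc X = X * (M * Y) := by rw [← hMX, ← Matrix.mul_assoc, hX₂]
    _ = Y := by rw [← Matrix.mul_assoc, hXM, hY₂]

lemma pinv_eq (hX : IsPenroseInverse M X) : pinv M = X := by
  have hex : ∃ X, IsPenroseInverse M X := ⟨X, hX⟩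
  unfold IsPenroseInverse at hex
  rw [pinv, dif_pos hex]
  exact unique hex.choose_spec hX

/-- `M X` is an orthogonal projection, so Pythagoras bounds `‖M X y‖` by `‖y‖`. -/
lemma mul_mulVec_dotProduct_self_le (hX : IsPenroseInverse M X) (y : Fin p → ℝ) :
    ((M * X) *ᵥ y) ⬝ᵥ ((M * X) *ᵥ y) ≤ y ⬝ᵥ y := by
  set P := M * X
  have hPP : Pᵀ * P = P := by rw [hX.2.2.1, ← Matrix.mul_assoc, hX.1]
  have hPy : (P *ᵥ y) ⬝ᵥ (P *ᵥ y) = y ⬝ᵥ (P *ᵥ y) := by rw [mulVec_dotProduct_mulVec_self, hPP]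
  have := dotProduct_self_nonneg (y - P *ᵥ y)
  rw [sub_dotProduct, dotProduct_sub, dotProduct_sub, dotProduct_comm (P *ᵥ y) y, hPy] at this
  linarith

lemma isometry_mul_mul_transpose (hX : IsPenroseInverse M X) {U : Matrix (Fin p') (Fin p) ℝ}
    {V : Matrix (Fin q') (Fin q) ℝ} (hU : Uᵀ * U = 1) (hV : Vᵀ * V = 1) :
    IsPenroseInverse (U * M * Vᵀ) (V * X * Uᵀ) := by
  obtain ⟨hX₁, hX₂, hX₃, hX₄⟩ := hX
  have hU' : ∀ {k} (Z : Matrix (Fin p) (Fin k) ℝ), Uᵀ * (U * Z) = Z := fun Z => by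
    rw [← Matrix.mul_assoc, hU, Matrix.one_mul]
  have hV' : ∀ {k} (Z : Matrix (Fin q) (Fin k) ℝ), Vᵀ * (V * Z) = Z := fun Z => by
    rw [← Matrix.mul_assoc, hV, Matrix.one_mul]
  have hUMX : U * M * Vᵀ * (V * X * Uᵀ) = U * (M * X) * Uᵀ := by
    simp only [Matrix.mul_assoc, hV']
  have hVXM : V * X * Uᵀ * (U * M * Vᵀ) = V * (X * M) * Vᵀ := by
    simp only [Matrix.mul_assoc, hU']
  refine ⟨?_, ?_, ?_, ?_⟩
  · rw [hUMX, Matrix.mul_assoc _ Uᵀ, Matrix.mul_assoc U M, hU', ← Matrix.mul_assoc,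
      Matrix.mul_assoc U (M * X) M, hX₁, Matrix.mul_assoc]
  · rw [hVXM, Matrix.mul_assoc _ Vᵀ, Matrix.mul_assoc V X, hV', ← Matrix.mul_assoc,
      Matrix.mul_assoc V (X * M) X, hX₂, Matrix.mul_assoc]
  · rw [hUMX, transpose_mul, transpose_mul, transpose_transpose, hX₃]
    simp only [Matrix.mul_assoc]
  · rw [hVXM, transpose_mul, transpose_mul, transpose_transpose, hX₄]
    simp only [Matrix.mul_assoc]

end IsPenroseInverse

end PenroseInverse

section FullColumnRank

variable {p q : ℕ}

lemma isUnit_det_transpose_mul_self_of_rank_eq {M : Matrix (Fin p) (Fin q) ℝ}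
    (h : M.rank = q) : IsUnit (Mᵀ * M).det := by
  rw [← isUnit_iff_isUnit_det, ← mulVec_surjective_iff_isUnit, ← coe_mulVecLin,
    ← LinearMap.range_eq_top]
  apply Submodule.eq_top_of_finrank_eq
  rw [← Matrix.rank, rank_transpose_mul_self, h, Module.finrank_fin_fun]

lemma isPenroseInverse_inv_transpose_mul_self_mul_transpose {M : Matrix (Fin p) (Fin q) ℝ}
    (h : IsUnit (Mᵀ * M).det) : IsPenroseInverse M ((Mᵀ * M)⁻¹ * Mᵀ) := by
  have hXM : (Mᵀ * M)⁻¹ * Mᵀ * M = 1 := by rw [Matrix.mul_assoc, nonsing_inv_mul _ h]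
  refine ⟨by rw [Matrix.mul_assoc, hXM, Matrix.mul_one], by rw [hXM, Matrix.one_mul], ?_,
    by rw [hXM, transpose_one]⟩
  rw [transpose_mul, transpose_mul, transpose_transpose, transpose_nonsing_inv, transpose_mul,
    transpose_transpose, Matrix.mul_assoc]

lemma spec_pinv_of_rank_eq (M : Matrix (Fin p) (Fin q) ℝ) (h : M.rank = q) :
    spec (pinv M) = (sval M q)⁻¹ := by
  rcases Nat.eq_zero_or_pos q with rfl | hq
  · rw [sval_zero, _root_.inv_zero]
    exact (spec_le_of_forall le_rfl fun x => by simp [dotProduct]).antisymm (spec_nonneg _)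
  have hσ := sval_pos M hq h.ge
  have hunit := isUnit_det_transpose_mul_self_of_rank_eq h
  set X := (Mᵀ * M)⁻¹ * Mᵀ
  have hX := isPenroseInverse_inv_transpose_mul_self_mul_transpose hunit
  have hXM : X * M = 1 := by rw [Matrix.mul_assoc, nonsing_inv_mul _ hunit]
  rw [hX.pinv_eq]
  apply le_antisymm
  · refine spec_le_of_forall (inv_nonneg.2 hσ.le) fun y => ?_
    have h₁ := sval_sq_mul_dotProduct_le M (X *ᵥ y)
    rw [mulVec_mulVec] at h₁
    rw [inv_pow, le_inv_mul_iff₀ (pow_pos hσ 2)]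
    exact h₁.trans (hX.mul_mulVec_dotProduct_self_le y)
  · obtain ⟨x, hx, hMx⟩ := exists_dotProduct_self_eq_one_and_sval_sq M hq
    have h₁ := mulVec_dotProduct_self_le_spec_sq X (M *ᵥ x)
    rw [mulVec_mulVec, hXM, one_mulVec, hx, hMx, ← mul_pow] at h₁
    rw [inv_le_iff_one_le_mul₀ hσ, ← abs_one]
    exact abs_le_of_sq_le_sq (by rwa [one_pow]) (mul_nonneg (spec_nonneg X) hσ.le)

end FullColumnRank

section RectangularDiagonal

variable {a b d : ℕ}

lemma sum_ite_val_eq (i : ℕ) (Y : Fin b → ℝ) :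
    ∑ j : Fin b, (if i = (j : ℕ) then Y j else 0) = if h : i < b then Y ⟨i, h⟩ else 0 := by
  split_ifs with h
  · simpa [Fin.ext_iff] using Finset.sum_ite_eq univ (⟨i, h⟩ : Fin b) Y
  · exact Finset.sum_eq_zero fun j _ => if_neg (by have := j.isLt; omega)

lemma sum_dite_val_lt_eq (Y : Fin b → ℝ) :
    ∑ i : Fin a, (if h : (i : ℕ) < b then Y ⟨i, h⟩ else 0) =
      ∑ j : Fin b, if (j : ℕ) < a then Y j else 0 := by
  simp_rw [← sum_ite_val_eq]
  rw [Finset.sum_comm]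
  refine Finset.sum_congr rfl fun j _ => ?_
  simp only [@eq_comm _ _ (j : ℕ)]
  rw [sum_ite_val_eq (j : ℕ) fun _ => Y j, dite_eq_ite]

def rectDiagonal (a b : ℕ) (f : ℕ → ℝ) : Matrix (Fin a) (Fin b) ℝ :=
  of fun i j => if (i : ℕ) = j then f i else 0

lemma svdSigma_eq_rectDiagonal {m n : ℕ} (A : Matrix (Fin m) (Fin n) ℝ) :
    svdSigma A = rectDiagonal m n fun k => sval A (k + 1) := rfl

lemma rectDiagonal_transpose (f : ℕ → ℝ) : (rectDiagonal a b f)ᵀ = rectDiagonal b a f := by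
  ext i j
  simp only [transpose_apply, rectDiagonal, of_apply, eq_comm (a := (j : ℕ))]
  split_ifs with h <;> simp [h]

lemma rectDiagonal_mul (f g : ℕ → ℝ) :
    rectDiagonal a b f * rectDiagonal b d g =
      rectDiagonal a d fun k => if k < b then f k * g k else 0 := by
  ext i j
  simp only [mul_apply, rectDiagonal, of_apply, ite_mul, zero_mul, sum_ite_val_eq]
  split_ifs <;> simp_all

lemma rectDiagonal_congr {f g : ℕ → ℝ} (h : ∀ k, k < a → k < b → f k = g k) :
    rectDiagonal a b f = rectDiagonal a b g := by
  ext i j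
  simp only [rectDiagonal, of_apply]
  split_ifs with hij
  · exact h i i.isLt (hij ▸ j.isLt)
  · rfl

lemma rectDiagonal_mulVec_apply (f : ℕ → ℝ) (y : Fin b → ℝ) (i : Fin a) :
    (rectDiagonal a b f *ᵥ y) i = if h : (i : ℕ) < b then f i * y ⟨i, h⟩ else 0 := by
  simp only [mulVec, dotProduct, rectDiagonal, of_apply, ite_mul, zero_mul, sum_ite_val_eq]

/-- The convention `0⁻¹ = 0` is exactly what the Penrose inverse of a diagonal matrix needs. -/
lemma isPenroseInverse_rectDiagonal (f : ℕ → ℝ) :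
    IsPenroseInverse (rectDiagonal a b f) (rectDiagonal b a fun k => (f k)⁻¹) := by
  refine ⟨?_, ?_, ?_, ?_⟩
  · rw [rectDiagonal_mul, rectDiagonal_mul]
    exact rectDiagonal_congr fun k ha hb => by simp [ha, hb, mul_inv_mul_cancel]
  · rw [rectDiagonal_mul, rectDiagonal_mul]
    exact rectDiagonal_congr fun k hb ha => by simpa [ha, hb] using mul_inv_mul_cancel (f k)⁻¹
  · rw [rectDiagonal_mul, rectDiagonal_transpose]
  · rw [rectDiagonal_mul, rectDiagonal_transpose]

lemma spec_rectDiagonal_le {f : ℕ → ℝ} {c : ℝ} (hc : 0 ≤ c) (hf : ∀ k, |f k| ≤ c) :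
    spec (rectDiagonal a b f) ≤ c := by
  refine spec_le_of_forall hc fun y => ?_
  calc (rectDiagonal a b f *ᵥ y) ⬝ᵥ (rectDiagonal a b f *ᵥ y)
      ≤ ∑ i : Fin a, c ^ 2 * (if h : (i : ℕ) < b then y ⟨i, h⟩ ^ 2 else 0) := by
        refine Finset.sum_le_sum fun i _ => ?_
        rw [← sq, rectDiagonal_mulVec_apply]
        split_ifs
        · rw [mul_pow]
          exact mul_le_mul_of_nonneg_right (sq_le_sq' (abs_le.mp (hf i)).1 (abs_le.mp (hf i)).2)
            (sq_nonneg _)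
        · simp
    _ = c ^ 2 * ∑ j : Fin b, if (j : ℕ) < a then y j ^ 2 else 0 := by
        rw [← Finset.mul_sum, sum_dite_val_lt_eq fun j => y j ^ 2]
    _ ≤ c ^ 2 * (y ⬝ᵥ y) := by
        refine mul_le_mul_of_nonneg_left (Finset.sum_le_sum fun j _ => ?_) (sq_nonneg c)
        split_ifs
        · exact (sq _).le
        · exact mul_self_nonneg _

end RectangularDiagonal

section Orthogonal

variable {p q p' q' : ℕ}

lemma spec_mul_mul_le {U : Matrix (Fin p') (Fin p) ℝ} {W : Matrix (Fin q) (Fin q') ℝ}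
    (hU : Uᵀ * U = 1) (hW : Wᵀ * W = 1) (M : Matrix (Fin p) (Fin q) ℝ) :
    spec (U * M * W) ≤ spec M := by
  refine spec_le_of_forall (spec_nonneg M) fun x => ?_
  rw [← mulVec_mulVec, ← mulVec_mulVec, mulVec_dotProduct_self_of_transpose_mul_self hU,
    ← mulVec_dotProduct_self_of_transpose_mul_self hW x]
  exact mulVec_dotProduct_self_le_spec_sq M _

lemma spec_mul_mul_transpose {U : Matrix (Fin p) (Fin p) ℝ} {V : Matrix (Fin q) (Fin q) ℝ}
    (hU : Uᵀ * U = 1) (hV : Vᵀ * V = 1) (M : Matrix (Fin p) (Fin q) ℝ) :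
    spec (U * M * Vᵀ) = spec M := by
  have hU' : Uᵀᵀ * Uᵀ = 1 := by rw [transpose_transpose, mul_eq_one_comm.mp hU]
  have hV' : Vᵀᵀ * Vᵀ = 1 := by rw [transpose_transpose, mul_eq_one_comm.mp hV]
  refine (spec_mul_mul_le hU hV' M).antisymm ?_
  calc spec M = spec (Uᵀ * (U * M * Vᵀ) * V) := by
        simp only [← Matrix.mul_assoc, hU, Matrix.one_mul]
        rw [Matrix.mul_assoc, hV, Matrix.mul_one]
    _ ≤ spec (U * M * Vᵀ) := spec_mul_mul_le hU' hV _

end Orthogonal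

lemma lead_mulVec {p q k : ℕ} (M : Matrix (Fin p) (Fin q) ℝ) (hk : k ≤ p) (x : Fin q → ℝ) :
    lead M k q hk le_rfl *ᵥ x = (M *ᵥ x) ∘ Fin.castLE hk :=
  rfl

section SVD

variable {m n : ℕ} {A : Matrix (Fin m) (Fin n) ℝ} {S : Matrix (Fin m) (Fin m) ℝ}
  {T : Matrix (Fin n) (Fin n) ℝ}

lemma isPenroseInverse_of_svd (hS : Sᵀ * S = 1) (hT : Tᵀ * T = 1)
    (hA : A = S * svdSigma A * Tᵀ) :
    IsPenroseInverse A (T * rectDiagonal n m (fun k => (sval A (k + 1))⁻¹) * Sᵀ) := by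
  have h := IsPenroseInverse.isometry_mul_mul_transpose
    (isPenroseInverse_rectDiagonal (a := m) (b := n) fun k => sval A (k + 1)) hS hT
  rwa [← svdSigma_eq_rectDiagonal, ← hA] at h

lemma spec_rectDiagonal_inv_sval {ρ : ℕ} (hρ : A.rank = ρ) :
    spec (rectDiagonal n m fun k => (sval A (k + 1))⁻¹) = (sval A ρ)⁻¹ := by
  apply le_antisymm
  · refine spec_rectDiagonal_le (inv_nonneg.2 (sval_nonneg A ρ)) fun k => ?_
    by_cases hk : k + 1 ≤ ρ
    · have hσ := sval_pos A (by omega) hρ.ge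
      rw [abs_of_nonneg (inv_nonneg.2 (sval_nonneg A _))]
      exact inv_anti₀ hσ (sval_antitone A (by omega) hk (hρ ▸ A.rank_le_width))
    · rw [sval_eq_zero_of_rank_lt A (by omega), _root_.inv_zero, abs_zero]
      exact inv_nonneg.2 (sval_nonneg A ρ)
  · rcases Nat.eq_zero_or_pos ρ with rfl | hρ0
    · rw [sval_zero, _root_.inv_zero]
      exact spec_nonneg _
    have hρm : ρ - 1 < m := by have := A.rank_le_height; omega
    have hρn : ρ - 1 < n := by have := A.rank_le_width; omega
    have h := abs_apply_le_spec (rectDiagonal n m fun k => (sval A (k + 1))⁻¹)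
      ⟨ρ - 1, hρn⟩ ⟨ρ - 1, hρm⟩
    rwa [rectDiagonal, of_apply, if_pos rfl, Nat.sub_add_cancel hρ0,
      abs_of_nonneg (inv_nonneg.2 (sval_nonneg A ρ))] at h

lemma spec_pinv_of_svd {ρ : ℕ} (hρ : A.rank = ρ) (hS : Sᵀ * S = 1) (hT : Tᵀ * T = 1)
    (hA : A = S * svdSigma A * Tᵀ) : spec (pinv A) = (sval A ρ)⁻¹ := by
  rw [(isPenroseInverse_of_svd hS hT hA).pinv_eq, spec_mul_mul_transpose hT hS,
    spec_rectDiagonal_inv_sval hρ]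

lemma sval_sq_mul_dotProduct_le_svdSigma {k : ℕ} (hkm : k ≤ m) (hkn : k ≤ n) (y : Fin n → ℝ) :
    sval A k ^ 2 * ((y ∘ Fin.castLE hkn) ⬝ᵥ (y ∘ Fin.castLE hkn)) ≤
      (svdSigma A *ᵥ y) ⬝ᵥ (svdSigma A *ᵥ y) := by
  calc sval A k ^ 2 * ((y ∘ Fin.castLE hkn) ⬝ᵥ (y ∘ Fin.castLE hkn))
      = ∑ i : Fin k, sval A k ^ 2 * y (Fin.castLE hkn i) ^ 2 := by
        simp only [dotProduct, Function.comp_apply, Finset.mul_sum, sq]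
    _ ≤ ∑ i : Fin k, (svdSigma A *ᵥ y) (Fin.castLE hkm i) ^ 2 := by
        refine Finset.sum_le_sum fun i _ => ?_
        have hin : ((Fin.castLE hkm i : Fin m) : ℕ) < n := by
          simp only [Fin.val_castLE]; omega
        rw [svdSigma_eq_rectDiagonal, rectDiagonal_mulVec_apply, dif_pos hin, mul_pow]
        refine mul_le_mul_of_nonneg_right (pow_le_pow_left₀ (sval_nonneg A k) ?_ 2) (sq_nonneg _)
        exact sval_antitone A (by omega) (by simp only [Fin.val_castLE]; omega) hkn
    _ ≤ ∑ i : Fin m, (svdSigma A *ᵥ y) i ^ 2 := by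
        have h := Finset.sum_le_univ_sum_of_nonneg (s := univ.map (Fin.castLEEmb hkm))
          (f := fun i => (svdSigma A *ᵥ y) i ^ 2) fun _ => sq_nonneg _
        rwa [Finset.sum_map] at h
    _ = (svdSigma A *ᵥ y) ⬝ᵥ (svdSigma A *ᵥ y) := by simp only [dotProduct, sq]

lemma sval_mul_sval_lead_le {r ρ : ℕ} (hρm : ρ ≤ m) (hρn : ρ ≤ n) (hS : Sᵀ * S = 1)
    (hA : A = S * svdSigma A * Tᵀ) (H : Matrix (Fin n) (Fin r) ℝ) :
    sval A ρ * sval (lead (Tᵀ * H) ρ r hρn le_rfl) r ≤ sval (A * H) r := by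
  rcases Nat.eq_zero_or_pos r with rfl | hr
  · simp
  refine le_sval_of_forall_sq_mul_le _ hr fun x => ?_
  have hAH : (A * H) *ᵥ x = S *ᵥ (svdSigma A *ᵥ ((Tᵀ * H) *ᵥ x)) := by
    nth_rw 1 [hA]
    simp only [mulVec_mulVec, Matrix.mul_assoc]
  calc (sval A ρ * sval (lead (Tᵀ * H) ρ r hρn le_rfl) r) ^ 2 * (x ⬝ᵥ x)
      = sval A ρ ^ 2 * (sval (lead (Tᵀ * H) ρ r hρn le_rfl) r ^ 2 * (x ⬝ᵥ x)) := by ring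
    _ ≤ sval A ρ ^ 2 * ((lead (Tᵀ * H) ρ r hρn le_rfl *ᵥ x) ⬝ᵥ
          (lead (Tᵀ * H) ρ r hρn le_rfl *ᵥ x)) :=
        mul_le_mul_of_nonneg_left (sval_sq_mul_dotProduct_le _ x) (sq_nonneg _)
    _ ≤ (svdSigma A *ᵥ ((Tᵀ * H) *ᵥ x)) ⬝ᵥ (svdSigma A *ᵥ ((Tᵀ * H) *ᵥ x)) := by
        rw [lead_mulVec]
        exact sval_sq_mul_dotProduct_le_svdSigma hρm hρn _
    _ = ((A * H) *ᵥ x) ⬝ᵥ ((A * H) *ᵥ x) := by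
        rw [hAH, mulVec_dotProduct_self_of_transpose_mul_self hS]

end SVD

theorem pinv_norm_right_product_general {m n r : ℕ} (A : Matrix (Fin m) (Fin n) ℝ)
    (ρ : ℕ) (hρ : A.rank = ρ) (hρn : ρ ≤ n)
    (S : Matrix (Fin m) (Fin m) ℝ) (T : Matrix (Fin n) (Fin n) ℝ)
    (hS : Sᵀ * S = 1) (hT : Tᵀ * T = 1) (hA : A = S * svdSigma A * Tᵀ)
    (H : Matrix (Fin n) (Fin r) ℝ) :
    (sval A ρ * sval (lead (Tᵀ * H) ρ r hρn le_rfl) r ≤ sval (A * H) r ∧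
     sval A ρ * sval (lead (Tᵀ * H) ρ r hρn le_rfl) r =
       sval (lead (Tᵀ * H) ρ r hρn le_rfl) r / spec (pinv A)) ∧
    ((A * H).rank = r → (lead (Tᵀ * H) ρ r hρn le_rfl).rank = r →
      spec (pinv (A * H)) ≤ spec (pinv A) * spec (pinv (lead (Tᵀ * H) ρ r hρn le_rfl))) := by
  have hpinvA : spec (pinv A) = (sval A ρ)⁻¹ := spec_pinv_of_svd hρ hS hT hA
  have hlower := sval_mul_sval_lead_le (hρ ▸ A.rank_le_height) hρn hS hA H
  refine ⟨⟨hlower, by rw [hpinvA, div_inv_eq_mul, mul_comm]⟩, fun hAH hL => ?_⟩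
  rw [spec_pinv_of_rank_eq _ hAH, spec_pinv_of_rank_eq _ hL, hpinvA, ← mul_inv]
  rcases Nat.eq_zero_or_pos r with rfl | hr
  · simp
  have hrρ : r ≤ ρ := hL ▸ (lead (Tᵀ * H) ρ r hρn le_rfl).rank_le_height
  exact inv_anti₀ (mul_pos (sval_pos A (hr.trans_le hrρ) hρ.ge) (sval_pos _ hr hL.ge)) hlower

/-- (i) `σ_r(AH) ≥ σ_ρ(A)·σ_r(Ĥ_{ρ,r}) = σ_r(Ĥ_{ρ,r})/‖A⁺‖`;
(ii) if `rank(AH) = rank(Ĥ_{ρ,r}) = r` then `‖(AH)⁺‖ ≤ ‖A⁺‖·‖Ĥ_{ρ,r}⁺‖`,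
where `Ĥ = T_Aᵀ H`. -/
theorem pinv_norm_right_product {m n r : ℕ} (A : Matrix (Fin m) (Fin n) ℝ)
    (ρ : ℕ) (hρ : A.rank = ρ) (hρn : ρ ≤ n)
    (S : Matrix (Fin m) (Fin m) ℝ) (T : Matrix (Fin n) (Fin n) ℝ)
    (hS : Sᵀ * S = 1) (hT : Tᵀ * T = 1) (hA : A = S * svdSigma A * Tᵀ)
    (H : Matrix (Fin n) (Fin r) ℝ) (hr : r ≤ ρ) :
    (sval A ρ * sval (lead (Tᵀ * H) ρ r hρn le_rfl) r ≤ sval (A * H) r ∧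
     sval A ρ * sval (lead (Tᵀ * H) ρ r hρn le_rfl) r =
       sval (lead (Tᵀ * H) ρ r hρn le_rfl) r / spec (pinv A)) ∧
    ((A * H).rank = r → (lead (Tᵀ * H) ρ r hρn le_rfl).rank = r →
      spec (pinv (A * H)) ≤ spec (pinv A) * spec (pinv (lead (Tᵀ * H) ρ r hρn le_rfl))) :=
  pinv_norm_right_product_general A ρ hρ hρn S T hS hT hA H
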